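/- Fix γ ∈ ℂ and let A_γ be the type (iii) algebra with parameter γ, with Killing form κ(u,v) = tr(L_u ∘ L_v). For u = c₁a + c₂a² + c₃a³ and v = d₁a + d₂a² + d₃a³ one has κ(u,v) = c₁d₁(γ² + 2). Consequently, if γ² ≠ −2 then the radical {v ∈ A_γ : κ(v,u) = 0 for all u ∈ A_γ} equals span{a², a³}, while if γ² = −2 then κ is identically zero even though A_γ is not nilpotent (L_aᵏ(a) ≠ 0 for all k). -/
import Mathlib


/-- `lpow μ x k` is the left-normed power `x^(k+1)`; so `lpow μ x 0 = x`,
`lpow μ x 1 = x·x = x²`, `lpow μ x 2 = x·x² = x³`, etc. -/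
def lpow {A : Type*} [AddCommGroup A] [Module ℂ A]
    (μ : A →ₗ[ℂ] A →ₗ[ℂ] A) (x : A) : ℕ → A
  | 0 => x
  | n + 1 => μ x (lpow μ x n)
/-- The 3-dimensional cyclic Leibniz algebra of type (iii) with parameter γ:
A_γ = ℂ³ with basis a = e₀, a² = e₁, a³ = e₂ and multiplication u·v = u₀ • L_a(v),
where L_a(a) = a², L_a(a²) = a³, L_a(a³) = a² + γa³ (so a²·v = a³·v = 0). -/
noncomputable def mulIII (γ : ℂ) : (Fin 3 → ℂ) →ₗ[ℂ] (Fin 3 → ℂ) →ₗ[ℂ] (Fin 3 → ℂ) :=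
  (LinearMap.proj 0).smulRight (Matrix.mulVecLin !![0,0,0;1,0,1;0,1,γ])

noncomputable def a : Fin 3 → ℂ := ![1,0,0]
noncomputable def a2 : Fin 3 → ℂ := ![0,1,0]
noncomputable def a3 : Fin 3 → ℂ := ![0,0,1]
/-- The Killing form κ(u,v) = tr(L_u ∘ L_v) of the type (iii) algebra A_γ. -/
noncomputable def killingIII (γ : ℂ) (u v : Fin 3 → ℂ) : ℂ :=
  LinearMap.trace ℂ (Fin 3 → ℂ) (mulIII γ u ∘ₗ mulIII γ v)

lemma mulIII_apply (γ : ℂ) (u : Fin 3 → ℂ) :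
    mulIII γ u = u 0 • Matrix.mulVecLin !![0,0,0;1,0,1;0,1,γ] := rfl

lemma killingIII_eq (γ : ℂ) (u v : Fin 3 → ℂ) :
    killingIII γ u v = u 0 * v 0 * (γ ^ 2 + 2) := by
  rw [killingIII, mulIII_apply, mulIII_apply, LinearMap.smul_comp, LinearMap.comp_smul,
    ← Matrix.mulVecLin_mul, map_smul, map_smul,
    LinearMap.trace_eq_matrix_trace ℂ (Pi.basisFun ℂ (Fin 3))]
  rw [show LinearMap.toMatrix (Pi.basisFun ℂ (Fin 3)) (Pi.basisFun ℂ (Fin 3)) =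
      LinearMap.toMatrix' from by
    simp [LinearMap.toMatrix', LinearMap.toMatrix]; rfl]
  rw [← Matrix.toLin'_apply', LinearMap.toMatrix'_toLin']
  simp [Matrix.trace, Matrix.mul_apply, Fin.sum_univ_three, Matrix.diag]
  ring

lemma powIII (γ : ℂ) (k : ℕ) :
    ∃ α β : ℂ, (mulIII γ a ^ (k + 1)) a = ![0, α, β] ∧
      α ^ 2 + γ * α * β - β ^ 2 ≠ 0 := by
  induction k with
  | zero =>
    refine ⟨1, 0, ?_, by norm_num⟩
    show mulIII γ a a = _
    rw [mulIII_apply]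
    simp [a]
    funext i
    fin_cases i <;> simp [Matrix.mulVec, dotProduct, Fin.sum_univ_three]
  | succ n ih =>
    obtain ⟨α, β, hv, hne⟩ := ih
    refine ⟨β, α + γ * β, ?_, ?_⟩
    · rw [pow_succ', Module.End.mul_apply, hv, mulIII_apply]
      simp [a]
      funext i
      fin_cases i <;>
        simp [Matrix.mulVec, dotProduct, Fin.sum_univ_three] <;> ring
    · intro h
      apply hne
      have : β ^ 2 + γ * β * (α + γ * β) - (α + γ * β) ^ 2 =
          -(α ^ 2 + γ * α * β - β ^ 2) := by ring
      rw [this] at h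
      linear_combination -h

/-- In A_γ, κ(c₁a + c₂a² + c₃a³, d₁a + d₂a² + d₃a³) = c₁d₁(γ² + 2).
If γ² ≠ −2, the radical of κ is span{a², a³}; if γ² = −2, κ is identically zero
even though A_γ is not nilpotent (L_aᵏ(a) ≠ 0 for all k). -/
theorem typeIII_killing_form (γ : ℂ) :
    (∀ c₁ c₂ c₃ d₁ d₂ d₃ : ℂ,
      killingIII γ (c₁ • a + c₂ • a2 + c₃ • a3) (d₁ • a + d₂ • a2 + d₃ • a3) =
        c₁ * d₁ * (γ ^ 2 + 2)) ∧
    (γ ^ 2 ≠ -2 →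
      {v : Fin 3 → ℂ | ∀ u : Fin 3 → ℂ, killingIII γ v u = 0} =
        ↑(Submodule.span ℂ ({a2, a3} : Set (Fin 3 → ℂ)))) ∧
    (γ ^ 2 = -2 →
      (∀ u v : Fin 3 → ℂ, killingIII γ u v = 0) ∧
      (∀ k : ℕ, (mulIII γ a ^ k) a ≠ 0)) := by
  refine ⟨?_, ?_, ?_⟩
  · intro c₁ c₂ c₃ d₁ d₂ d₃
    rw [killingIII_eq]
    simp [a, a2, a3]
  · intro hγ
    have h2 : γ ^ 2 + 2 ≠ 0 := by
      intro h; apply hγ; linear_combination h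
    ext v
    simp only [Set.mem_setOf_eq, SetLike.mem_coe]
    constructor
    · intro hv
      have h0 : v 0 = 0 := by
        have := hv a
        rw [killingIII_eq] at this
        simp [a] at this
        rcases this with h | h
        · exact h
        · exact absurd h h2
      have : v = v 1 • a2 + v 2 • a3 := by
        funext i
        fin_cases i <;> simp [a2, a3] <;> assumption
      rw [this]
      exact Submodule.add_mem _
        (Submodule.smul_mem _ _ (Submodule.subset_span (by simp)))
        (Submodule.smul_mem _ _ (Submodule.subset_span (by simp)))
    · intro hv u
      rw [killingIII_eq]
      rw [Submodule.mem_span_pair] at hv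
      obtain ⟨c, d, rfl⟩ := hv
      simp [a2, a3]
  · intro hγ
    refine ⟨fun u v => ?_, fun k => ?_⟩
    · rw [killingIII_eq, hγ]
      ring
    · cases k with
      | zero =>
        simp only [pow_zero, Module.End.one_apply]
        intro h
        have := congrFun h 0
        simp [a] at this
      | succ n =>
        obtain ⟨α, β, hv, hne⟩ := powIII γ n
        rw [hv]
        intro h
        apply hne
        have h1 := congrFun h 1
        have h2 := congrFun h 2
        simp at h1 h2
        rw [h1, h2]
        ring
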